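/- Suppose Y, Σ are symmetric positive definite, 0 < λ < 1, α > 0, and the LMI [[λY, (Y-2αΣ)^T],[Y-2αΣ, Y]] ⪰ 0 holds. If A, B, F satisfy AY + BF = Y - 2αΣ, then K = FY^{-1} makes A+BK Schur stable (spectral radius < 1). -/

import Mathlib

open Matrix

/-- Spectral radius of a real matrix: supremum of the moduli of its complex eigenvalues. -/
noncomputable def specRad {n : ℕ} (A : Matrix (Fin n) (Fin n) ℝ) : ℝ :=
  sSup ((fun z : ℂ => ‖z‖) '' spectrum ℂ (A.map Complex.ofReal))

/-!
By the Schur complement with respect to the block `Y ≻ 0`, the LMI says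
`λY - ZᵀY⁻¹Z ⪰ 0` for `Z = Y - 2αΣ = (A + BK)Y`; congruence by `P = Y⁻¹` turns this into the
Stein inequality `(A + BK)ᵀ P (A + BK) ⪯ λP`. Testing it on a complex eigenvector `v` of `A + BK`
with eigenvalue `μ` gives `(λ - |μ|²) v*Pv ≥ 0` with `v*Pv > 0`, so `|μ| ≤ √λ < 1`.
-/

open scoped ComplexOrder

namespace Matrix

variable {ι : Type*} [Fintype ι]

theorem PosSemidef.smul_inv_sub_of_fromBlocks [DecidableEq ι] {K : Type*} [Field K]
    [PartialOrder K] [StarRing K] [StarOrderedRing K] {Y Z : Matrix ι ι K} {l : K}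
    (hY : Y.PosDef) (h : (fromBlocks (l • Y) Zᴴ Z Y).PosSemidef) :
    (l • Y⁻¹ - (Z * Y⁻¹)ᴴ * Y⁻¹ * (Z * Y⁻¹)).PosSemidef := by
  have := hY.isUnit.invertible
  have hschur : (l • Y - Zᴴ * Y⁻¹ * Z).PosSemidef := by
    simpa using (PosDef.fromBlocks₂₂ (l • Y) Zᴴ hY).mp (by rwa [conjTranspose_conjTranspose])
  have hYinv : Y⁻¹ᴴ = Y⁻¹ := hY.isHermitian.inv
  convert hschur.conjTranspose_mul_mul_same Y⁻¹ using 1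
  rw [hYinv, conjTranspose_mul, hYinv, Matrix.mul_sub, Matrix.sub_mul, Matrix.mul_smul,
    Matrix.smul_mul, inv_mul_of_invertible, Matrix.one_mul]
  simp only [Matrix.mul_assoc]

theorem sq_norm_le_of_mulVec_eq_smul {𝕜 : Type*} [RCLike 𝕜] {M P : Matrix ι ι 𝕜} {l : ℝ}
    (hP : P.PosDef) (h : ((l : 𝕜) • P - Mᴴ * P * M).PosSemidef) {μ : 𝕜} {v : ι → 𝕜}
    (hv : v ≠ 0) (hMv : M *ᵥ v = μ • v) : ‖μ‖ ^ 2 ≤ l := by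
  set q := star v ⬝ᵥ (P *ᵥ v)
  have hquad : star v ⬝ᵥ ((Mᴴ * P * M) *ᵥ v) = ((‖μ‖ ^ 2 : ℝ) : 𝕜) * q := by
    rw [← mulVec_mulVec, ← mulVec_mulVec, dotProduct_mulVec, ← star_mulVec, hMv, mulVec_smul,
      star_smul, dotProduct_smul, smul_dotProduct, smul_smul, smul_eq_mul, RCLike.star_def,
      RCLike.mul_conj]
    norm_cast
  have hnonneg := h.re_dotProduct_nonneg v
  rw [sub_mulVec, dotProduct_sub, smul_mulVec, dotProduct_smul, hquad, smul_eq_mul, ← sub_mul,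
    ← RCLike.ofReal_sub, RCLike.re_ofReal_mul] at hnonneg
  have hq : 0 < RCLike.re q := hP.re_dotProduct_pos hv
  nlinarith

open scoped MatrixOrder in
theorem PosSemidef.map_ofReal {𝕜 : Type*} [RCLike 𝕜] {N : Matrix ι ι ℝ} (hN : N.PosSemidef) :
    (N.map ((↑) : ℝ → 𝕜)).PosSemidef := by
  classical
  obtain ⟨B, rfl⟩ := CStarAlgebra.nonneg_iff_eq_star_mul_self.mp hN.nonneg
  have hmap : (star B * B).map ((↑) : ℝ → 𝕜) = (B.map (↑))ᴴ * B.map (↑) := by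
    rw [← conjTranspose_map _ (fun _ ↦ (RCLike.conj_ofReal _).symm), ← star_eq_conjTranspose]
    exact Matrix.map_mul (f := algebraMap ℝ 𝕜)
  rw [hmap]
  exact posSemidef_conjTranspose_mul_self _

theorem PosDef.map_ofReal [DecidableEq ι] {𝕜 : Type*} [RCLike 𝕜] {N : Matrix ι ι ℝ}
    (hN : N.PosDef) : (N.map ((↑) : ℝ → 𝕜)).PosDef := by
  rw [hN.posSemidef.map_ofReal.posDef_iff_det_ne_zero, ← RCLike.algebraMap_eq_ofReal,
    ← RingHom.mapMatrix_apply, ← RingHom.map_det]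
  exact (FaithfulSMul.algebraMap_eq_zero_iff ℝ 𝕜).not.mpr hN.det_pos.ne'

end Matrix

theorem specRad_le_sqrt_of_posSemidef_smul_sub {n : ℕ} {M P : Matrix (Fin n) (Fin n) ℝ} {l : ℝ}
    (hP : P.PosDef) (h : (l • P - Mᵀ * P * M).PosSemidef) : specRad M ≤ √l := by
  have hℂ : ((l : ℂ) • P.map Complex.ofReal -
      (M.map Complex.ofReal)ᴴ * P.map Complex.ofReal * M.map Complex.ofReal).PosSemidef := by
    have hmap : (l • P - Mᵀ * P * M).map Complex.ofReal = (l : ℂ) • P.map Complex.ofReal -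
        (M.map Complex.ofReal)ᴴ * P.map Complex.ofReal * M.map Complex.ofReal := by
      ext i j
      simp [Matrix.mul_apply]
    exact hmap ▸ h.map_ofReal
  refine Real.sSup_le ?_ (Real.sqrt_nonneg l)
  rintro _ ⟨μ, hμ, rfl⟩
  rw [← spectrum_toLin', ← Module.End.hasEigenvalue_iff_mem_spectrum] at hμ
  obtain ⟨v, hv⟩ := hμ.exists_hasEigenvector
  exact Real.le_sqrt_of_sq_le <|
    sq_norm_le_of_mulVec_eq_smul hP.map_ofReal hℂ hv.2 hv.apply_eq_smul

theorem lmi_implies_schur_stability_general {n m : ℕ}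
    (A : Matrix (Fin n) (Fin n) ℝ) (B : Matrix (Fin n) (Fin m) ℝ)
    (F : Matrix (Fin m) (Fin n) ℝ) (Y S : Matrix (Fin n) (Fin n) ℝ)
    (hYpd : Y.PosDef)
    (α l : ℝ) (hl1 : l < 1)
    (hlmi : (Matrix.fromBlocks (l • Y) (Y - (2 * α) • S)ᵀ (Y - (2 * α) • S) Y).PosSemidef)
    (heq : A * Y + B * F = Y - (2 * α) • S) :
    specRad (A + B * (F * Y⁻¹)) < 1 := by
  have hclosed : A + B * (F * Y⁻¹) = (Y - (2 * α) • S) * Y⁻¹ := by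
    rw [← heq, Matrix.add_mul, Matrix.mul_assoc, Matrix.mul_assoc,
      mul_nonsing_inv _ hYpd.det_pos.ne'.isUnit, Matrix.mul_one]
  have hstein := PosSemidef.smul_inv_sub_of_fromBlocks hYpd
    (by rwa [conjTranspose_eq_transpose_of_trivial])
  rw [← hclosed, conjTranspose_eq_transpose_of_trivial] at hstein
  calc specRad (A + B * (F * Y⁻¹)) ≤ √l := specRad_le_sqrt_of_posSemidef_smul_sub hYpd.inv hstein
    _ < 1 := (Real.sqrt_lt' one_pos).mpr (by simpa using hl1)

/-- If the contraction LMI [[λY, (Y-2αΣ)ᵀ],[Y-2αΣ, Y]] ⪰ 0 holds with Y, Σ ≻ 0,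
0 < λ < 1, α > 0, and AY + BF = Y - 2αΣ, then K = FY⁻¹ makes A + BK Schur stable. -/
theorem lmi_implies_schur_stability {n m : ℕ}
    (A : Matrix (Fin n) (Fin n) ℝ) (B : Matrix (Fin n) (Fin m) ℝ)
    (F : Matrix (Fin m) (Fin n) ℝ) (Y S : Matrix (Fin n) (Fin n) ℝ)
    (hY : Y.IsSymm) (hYpd : Y.PosDef) (hS : S.IsSymm) (hSpd : S.PosDef)
    (α l : ℝ) (hα : 0 < α) (hl0 : 0 < l) (hl1 : l < 1)
    (hlmi : (Matrix.fromBlocks (l • Y) (Y - (2 * α) • S)ᵀ (Y - (2 * α) • S) Y).PosSemidef)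
    (heq : A * Y + B * F = Y - (2 * α) • S) :
    specRad (A + B * (F * Y⁻¹)) < 1 :=
  lmi_implies_schur_stability_general A B F Y S hYpd α l hl1 hlmi heq
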